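/- For any SEP instance and any escape assignment, the density of the assignment is at most 4 times its boundary density: if some grid point lies on D of the chosen escape paths, then some boundary grid point lies on at least ⌈D/4⌉ of the chosen escape paths. In particular, the minimum density k and the minimum boundary density k_B satisfy k_B ≥ k/4. -/

import Mathlib

/-!
A path through `q` in direction `d` runs on from `q` to the grid side in direction `d`, so every
path through `q` also passes through the boundary point `sepEnd N q d`. Splitting the paths
through `q` by their four directions, one class holds at least a quarter of them, and all of
those pass through a single boundary point.
-/

/-- One of the four axis-aligned escape directions. -/
inductive Dir | left | right | up | down
deriving DecidableEq

instance : Fintype Dir where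
  elems := {Dir.left, Dir.right, Dir.up, Dir.down}
  complete := by intro x; cases x <;> simp

/-- `q` is a point of the grid `{1,…,N} × {1,…,N}`. -/
def inGrid (N : ℕ) (q : ℕ × ℕ) : Prop := 1 ≤ q.1 ∧ q.1 ≤ N ∧ 1 ≤ q.2 ∧ q.2 ≤ N

/-- `q` is a boundary grid point: a grid point with some coordinate equal to `1` or `N`. -/
def onBoundary (N : ℕ) (q : ℕ × ℕ) : Prop :=
  inGrid N q ∧ (q.1 = 1 ∨ q.1 = N ∨ q.2 = 1 ∨ q.2 = N)

/-- The escape path of a grid point in a given direction. -/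
def sepPath (N : ℕ) (p : ℕ × ℕ) : Dir → Set (ℕ × ℕ)
  | Dir.right => {q | q.2 = p.2 ∧ p.1 ≤ q.1 ∧ q.1 ≤ N}
  | Dir.left  => {q | q.2 = p.2 ∧ 1 ≤ q.1 ∧ q.1 ≤ p.1}
  | Dir.up    => {q | q.1 = p.1 ∧ p.2 ≤ q.2 ∧ q.2 ≤ N}
  | Dir.down  => {q | q.1 = p.1 ∧ 1 ≤ q.2 ∧ q.2 ≤ p.2}

/-- The endpoint of the escape path of a grid point in a given direction. -/
def sepEnd (N : ℕ) (p : ℕ × ℕ) : Dir → ℕ × ℕ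
  | Dir.right => (N, p.2)
  | Dir.left  => (1, p.2)
  | Dir.up    => (p.1, N)
  | Dir.down  => (p.1, 1)

/-- Density at grid point `q` of the escape assignment `σ` for the family of points `R`. -/
noncomputable def sepDensity {n : ℕ} (N : ℕ) (R : Fin n → ℕ × ℕ) (σ : Fin n → Dir)
    (q : ℕ × ℕ) : ℕ :=
  {i | q ∈ sepPath N (R i) (σ i)}.ncard

/-- The minimum density `k` over all escape assignments. -/
noncomputable def sepOpt {n : ℕ} (N : ℕ) (R : Fin n → ℕ × ℕ) : ℕ :=
  sInf {k | ∃ σ : Fin n → Dir, ∀ q, inGrid N q → sepDensity N R σ q ≤ k}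

/-- The minimum boundary density `k_B` over all escape assignments. -/
noncomputable def sepOptB {n : ℕ} (N : ℕ) (R : Fin n → ℕ × ℕ) : ℕ :=
  sInf {k | ∃ σ : Fin n → Dir, ∀ q, onBoundary N q → sepDensity N R σ q ≤ k}

open Finset

theorem Finset.exists_card_le_card_mul_card_fiber {α β : Type*} [Fintype β] [Nonempty β]
    [DecidableEq β] (s : Finset α) (f : α → β) :
    ∃ y, #s ≤ Fintype.card β * #{x ∈ s | f x = y} := by
  obtain ⟨y, -, hy⟩ := exists_le_of_sum_le (s := univ) (f := fun _ => #s)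
    (g := fun y => Fintype.card β * #{x ∈ s | f x = y}) univ_nonempty <| by
      rw [← mul_sum, ← card_eq_sum_card_fiberwise (fun x _ => mem_univ (f x))]
      simp [mul_comm]
  exact ⟨y, hy⟩

theorem sepEnd_mem_sepPath {N : ℕ} {p q : ℕ × ℕ} {d : Dir} (h : q ∈ sepPath N p d) :
    sepEnd N q d ∈ sepPath N p d := by
  cases d <;> simp only [sepPath, sepEnd, Set.mem_ofPred_eq] at h ⊢ <;> omega

theorem onBoundary_sepEnd {N : ℕ} {q : ℕ × ℕ} (hq : inGrid N q) (d : Dir) :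
    onBoundary N (sepEnd N q d) := by
  obtain ⟨_, _, _, _⟩ := hq
  cases d <;> dsimp only [onBoundary, inGrid, sepEnd] <;> omega

section Density

variable {n : ℕ} (N : ℕ) (R : Fin n → ℕ × ℕ) (σ : Fin n → Dir)

open Classical in
theorem sepDensity_eq_card (q : ℕ × ℕ) :
    sepDensity N R σ q = #{i | q ∈ sepPath N (R i) (σ i)} := by
  rw [sepDensity, ← Set.ncard_coe_finset, coe_filter_univ]

theorem sepDensity_le (q : ℕ × ℕ) : sepDensity N R σ q ≤ n :=
  (Set.ncard_le_card _).trans_eq (Nat.card_fin n)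

theorem exists_onBoundary_sepDensity_le_four_mul {q : ℕ × ℕ} (hq : inGrid N q) :
    ∃ b, onBoundary N b ∧ sepDensity N R σ q ≤ 4 * sepDensity N R σ b := by
  classical
  have : Nonempty Dir := ⟨.left⟩
  obtain ⟨d, hd⟩ := exists_card_le_card_mul_card_fiber {i | q ∈ sepPath N (R i) (σ i)} σ
  refine ⟨sepEnd N q d, onBoundary_sepEnd hq d, ?_⟩
  rw [sepDensity_eq_card, sepDensity_eq_card]
  refine hd.trans (Nat.mul_le_mul_left _ (card_le_card fun i hi => ?_))
  simp only [mem_filter, mem_univ, true_and] at hi ⊢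
  exact hi.2 ▸ sepEnd_mem_sepPath (hi.2 ▸ hi.1)

end Density

theorem sepOpt_le_four_mul_sepOptB {n : ℕ} (N : ℕ) (R : Fin n → ℕ × ℕ) :
    sepOpt N R ≤ 4 * sepOptB N R := by
  obtain ⟨σ, hσ⟩ : sepOptB N R ∈
      {k | ∃ σ : Fin n → Dir, ∀ q, onBoundary N q → sepDensity N R σ q ≤ k} :=
    Nat.sInf_mem ⟨n, fun _ => .left, fun q _ => sepDensity_le N R _ q⟩
  refine Nat.sInf_le ⟨σ, fun q hq => ?_⟩
  obtain ⟨b, hb, hqb⟩ := exists_onBoundary_sepDensity_le_four_mul N R σ hq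
  exact hqb.trans (Nat.mul_le_mul_left 4 (hσ b hb))

theorem sep_density_le_four_boundary_general {n N : ℕ}
    (R : Fin n → ℕ × ℕ)
    (k kB : ℕ) (hk : k = sepOpt N R) (hkB : kB = sepOptB N R) :
    (∀ σ : Fin n → Dir, ∀ q, inGrid N q →
      ∃ b, onBoundary N b ∧ (sepDensity N R σ q + 3) / 4 ≤ sepDensity N R σ b) ∧
    k ≤ 4 * kB := by
  refine ⟨fun σ q hq => ?_, hk ▸ hkB ▸ sepOpt_le_four_mul_sepOptB N R⟩
  obtain ⟨b, hb, hqb⟩ := exists_onBoundary_sepDensity_le_four_mul N R σ hq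
  exact ⟨b, hb, by omega⟩

/-- For any SEP instance and any escape assignment, if a grid point lies on
`D` chosen escape paths then some boundary grid point lies on at least `⌈D/4⌉` of them
(so the density is at most four times the boundary density); in particular `k ≤ 4·k_B`. -/
theorem sep_density_le_four_boundary {n N : ℕ} (hN : 2 ≤ N)
    (R : Fin n → ℕ × ℕ) (hR : ∀ i, inGrid N (R i))
    (k kB : ℕ) (hk : k = sepOpt N R) (hkB : kB = sepOptB N R) :
    (∀ σ : Fin n → Dir, ∀ q, inGrid N q →
      ∃ b, onBoundary N b ∧ (sepDensity N R σ q + 3) / 4 ≤ sepDensity N R σ b) ∧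
    k ≤ 4 * kB :=
  sep_density_le_four_boundary_general R k kB hk hkB
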